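/- arXiv:1412.2219 — 2 statements merged into one kernel-verified Lean document; each statement's English description precedes it below -/
import Mathlib

section
/- Generation lemma for λ®∩: (i) Γ ⊢ λx.M : τ iff τ = α→σ and Γ,x:α ⊢ M:σ; (ii) Γ ⊢ MN:σ iff Γ splits as Γ', Δ₀^⊤⊓Δ₁⊓…⊓Δₙ with Γ' ⊢ M:∩ᵢⁿτᵢ→σ and Δᵢ ⊢ N:τᵢ for all i; (iii) Γ ⊢ z<x,y>M : σ iff Γ = Γ',z:α∩β and Γ',x:α,y:β ⊢ M:σ; (iv) Γ ⊢ x⊙M : σ iff Γ = Γ',x:⊤ and Γ' ⊢ M:σ. -/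
namespace RC

/-- Raw terms of the resource control lambda calculus λ® extended with
an explicit substitution operator (λ®^[/]). -/
inductive RTerm : Type
  | var : ℕ → RTerm
  | abs : ℕ → RTerm → RTerm
  | app : RTerm → RTerm → RTerm
  | era : ℕ → RTerm → RTerm              -- x ⊙ M   (erasure)
  | dup : ℕ → ℕ → ℕ → RTerm → RTerm      -- x<x₁,x₂>M  (duplication)
  | sub : RTerm → ℕ → RTerm → RTerm      -- M[N/x]  (explicit substitution)
  deriving DecidableEq

/-- Free variables. -/
def fv : RTerm → Finset ℕ
  | .var x => {x}
  | .abs x M => fv M \ {x}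
  | .app M N => fv M ∪ fv N
  | .era x M => insert x (fv M)
  | .dup x x₁ x₂ M => insert x (fv M \ {x₁, x₂})
  | .sub M x N => (fv M \ {x}) ∪ fv N

/-- Substitution-free terms (raw λ®-terms). -/
def SubFree : RTerm → Prop
  | .var _ => True
  | .abs _ M => SubFree M
  | .app M N => SubFree M ∧ SubFree N
  | .era _ M => SubFree M
  | .dup _ _ _ M => SubFree M
  | .sub _ _ _ => False

/-- Well-formed λ®^[/]-terms (linearity conditions).  A λ®-term is a
well-formed substitution-free term. -/
inductive WF : RTerm → Prop
  | var (x : ℕ) : WF (.var x)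
  | abs {M : RTerm} {x : ℕ} : WF M → x ∈ fv M → WF (.abs x M)
  | app {M N : RTerm} : WF M → WF N → Disjoint (fv M) (fv N) → WF (.app M N)
  | era {M : RTerm} {x : ℕ} : WF M → x ∉ fv M → WF (.era x M)
  | dup {M : RTerm} {x x₁ x₂ : ℕ} : WF M → x₁ ∈ fv M → x₂ ∈ fv M → x₁ ≠ x₂ →
      x ∉ fv M \ {x₁, x₂} → WF (.dup x x₁ x₂ M)
  | sub {M N : RTerm} {x : ℕ} : WF M → x ∈ fv M → WF N → SubFree N →
      Disjoint (fv M \ {x}) (fv N) → WF (.sub M x N)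

/-- Iterated erasure `x₁⊙…⊙xₙ⊙M` over a list of variables. -/
def eraList : List ℕ → RTerm → RTerm
  | [], M => M
  | x :: L, M => .era x (eraList L M)

/-- Iterated duplication `x₁<ρ₁x₁,ρ₂x₁>…xₙ<ρ₁xₙ,ρ₂xₙ>M`. -/
def dupList (ρ₁ ρ₂ : ℕ → ℕ) : List ℕ → RTerm → RTerm
  | [], M => M
  | x :: L, M => .dup x (ρ₁ x) (ρ₂ x) (dupList ρ₁ ρ₂ L M)

/-- Renaming of (all) variables of a term. -/
def rename (ρ : ℕ → ℕ) : RTerm → RTerm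
  | .var x => .var (ρ x)
  | .abs x M => .abs (ρ x) (rename ρ M)
  | .app M N => .app (rename ρ M) (rename ρ N)
  | .era x M => .era (ρ x) (rename ρ M)
  | .dup x x₁ x₂ M => .dup (ρ x) (ρ x₁) (ρ x₂) (rename ρ M)
  | .sub M x N => .sub (rename ρ M) (ρ x) (rename ρ N)

/-- The list of free variables of a term (sorted). -/
def fvList (M : RTerm) : List ℕ := (fv M).sort (· ≤ ·)

/-- Root steps of the evaluation of the explicit substitution operator. -/
inductive SubStep : RTerm → RTerm → Prop
  | var (x : ℕ) (N : RTerm) : SubStep (.sub (.var x) x N) N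
  | abs {x y : ℕ} {M N : RTerm} : x ≠ y →
      SubStep (.sub (.abs y M) x N) (.abs y (.sub M x N))
  | appL {x : ℕ} {M P N : RTerm} : x ∈ fv M →
      SubStep (.sub (.app M P) x N) (.app (.sub M x N) P)
  | appR {x : ℕ} {M P N : RTerm} : x ∈ fv P →
      SubStep (.sub (.app M P) x N) (.app M (.sub P x N))
  | eraNe {x y : ℕ} {M N : RTerm} : x ≠ y →
      SubStep (.sub (.era y M) x N) (.era y (.sub M x N))
  | eraEq {x : ℕ} {M N : RTerm} :
      SubStep (.sub (.era x M) x N) (eraList (fvList N) M)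
  | dupNe {x y y₁ y₂ : ℕ} {M N : RTerm} : x ≠ y →
      SubStep (.sub (.dup y y₁ y₂ M) x N) (.dup y y₁ y₂ (.sub M x N))
  | dupEq {x x₁ x₂ : ℕ} {M N : RTerm} {ρ₁ ρ₂ : ℕ → ℕ} :
      Set.InjOn ρ₁ (fv N) → Set.InjOn ρ₂ (fv N) →
      (∀ y ∈ fv N, ρ₁ y ∉ fv M ∪ fv N ∧ ρ₂ y ∉ fv M ∪ fv N) →
      (∀ y ∈ fv N, ∀ z ∈ fv N, ρ₁ y ≠ ρ₂ z) →
      SubStep (.sub (.dup x x₁ x₂ M) x N)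
        (dupList ρ₁ ρ₂ (fvList N)
          (.sub (.sub M x₁ (rename ρ₁ N)) x₂ (rename ρ₂ N)))

/-- One step of substitution evaluation, closed under contexts. -/
inductive SStep : RTerm → RTerm → Prop
  | root {M N : RTerm} : SubStep M N → SStep M N
  | abs {x : ℕ} {M M' : RTerm} : SStep M M' → SStep (.abs x M) (.abs x M')
  | appL {M M' N : RTerm} : SStep M M' → SStep (.app M N) (.app M' N)
  | appR {M N N' : RTerm} : SStep N N' → SStep (.app M N) (.app M N')
  | era {x : ℕ} {M M' : RTerm} : SStep M M' → SStep (.era x M) (.era x M')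
  | dup {x x₁ x₂ : ℕ} {M M' : RTerm} : SStep M M' →
      SStep (.dup x x₁ x₂ M) (.dup x x₁ x₂ M')
  | subL {x : ℕ} {M M' N : RTerm} : SStep M M' → SStep (.sub M x N) (.sub M' x N)
  | subR {x : ℕ} {M N N' : RTerm} : SStep N N' → SStep (.sub M x N) (.sub M x N')

/-- Many-step substitution evaluation. -/
def SSteps : RTerm → RTerm → Prop := Relation.ReflTransGen SStep

/-- Normal forms for substitution evaluation. -/
def NormalS (M : RTerm) : Prop := ∀ N, ¬ SStep M N

/-- Root reduction rules of λ®.  Substitution `M⟨N/x⟩` is characterised as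
the (unique) substitution-evaluation normal form of `M[N/x]`. -/
inductive HeadStep : RTerm → RTerm → Prop
  | beta {x : ℕ} {M N P : RTerm} : SSteps (.sub M x N) P → NormalS P →
      HeadStep (.app (.abs x M) N) P
  | gamma1 {x x₁ x₂ y : ℕ} {M : RTerm} :
      HeadStep (.dup x x₁ x₂ (.abs y M)) (.abs y (.dup x x₁ x₂ M))
  | gamma2 {x x₁ x₂ : ℕ} {M N : RTerm} : x₁ ∉ fv N → x₂ ∉ fv N →
      HeadStep (.dup x x₁ x₂ (.app M N)) (.app (.dup x x₁ x₂ M) N)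
  | gamma3 {x x₁ x₂ : ℕ} {M N : RTerm} : x₁ ∉ fv M → x₂ ∉ fv M →
      HeadStep (.dup x x₁ x₂ (.app M N)) (.app M (.dup x x₁ x₂ N))
  | omega1 {x y : ℕ} {M : RTerm} : x ≠ y →
      HeadStep (.abs x (.era y M)) (.era y (.abs x M))
  | omega2 {x : ℕ} {M N : RTerm} :
      HeadStep (.app (.era x M) N) (.era x (.app M N))
  | omega3 {x : ℕ} {M N : RTerm} :
      HeadStep (.app M (.era x N)) (.era x (.app M N))
  | gammaOmega1 {x x₁ x₂ y : ℕ} {M : RTerm} : y ≠ x₁ → y ≠ x₂ →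
      HeadStep (.dup x x₁ x₂ (.era y M)) (.era y (.dup x x₁ x₂ M))
  | gammaOmega2 {x x₁ x₂ : ℕ} {M P : RTerm} :
      SSteps (.sub M x₂ (.var x)) P → NormalS P →
      HeadStep (.dup x x₁ x₂ (.era x₁ M)) P

/-- Structural equivalence ≡ of λ®. -/
inductive SEquiv : RTerm → RTerm → Prop
  | eps1 {x y : ℕ} {M : RTerm} : SEquiv (.era x (.era y M)) (.era y (.era x M))
  | eps2 {x x₁ x₂ : ℕ} {M : RTerm} : SEquiv (.dup x x₁ x₂ M) (.dup x x₂ x₁ M)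
  | eps3 {x y z u v : ℕ} {M : RTerm} :
      SEquiv (.dup x y z (.dup y u v M)) (.dup x y u (.dup y z v M))
  | eps4 {x x₁ x₂ y y₁ y₂ : ℕ} {M : RTerm} : x ≠ y₁ → x ≠ y₂ → y ≠ x₁ → y ≠ x₂ →
      SEquiv (.dup x x₁ x₂ (.dup y y₁ y₂ M)) (.dup y y₁ y₂ (.dup x x₁ x₂ M))
  | refl (M : RTerm) : SEquiv M M
  | symm {M N : RTerm} : SEquiv M N → SEquiv N M
  | trans {M N P : RTerm} : SEquiv M N → SEquiv N P → SEquiv M P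
  | abs {x : ℕ} {M M' : RTerm} : SEquiv M M' → SEquiv (.abs x M) (.abs x M')
  | appL {M M' N : RTerm} : SEquiv M M' → SEquiv (.app M N) (.app M' N)
  | appR {M N N' : RTerm} : SEquiv N N' → SEquiv (.app M N) (.app M N')
  | era {x : ℕ} {M M' : RTerm} : SEquiv M M' → SEquiv (.era x M) (.era x M')
  | dup {x x₁ x₂ : ℕ} {M M' : RTerm} : SEquiv M M' →
      SEquiv (.dup x x₁ x₂ M) (.dup x x₁ x₂ M')

/-- Contextual closure of the root reduction rules. -/
inductive CStep : RTerm → RTerm → Prop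
  | root {M N : RTerm} : HeadStep M N → CStep M N
  | abs {x : ℕ} {M M' : RTerm} : CStep M M' → CStep (.abs x M) (.abs x M')
  | appL {M M' N : RTerm} : CStep M M' → CStep (.app M N) (.app M' N)
  | appR {M N N' : RTerm} : CStep N N' → CStep (.app M N) (.app M N')
  | era {x : ℕ} {M M' : RTerm} : CStep M M' → CStep (.era x M) (.era x M')
  | dup {x x₁ x₂ : ℕ} {M M' : RTerm} : CStep M M' →
      CStep (.dup x x₁ x₂ M) (.dup x x₁ x₂ M')

/-- One-step λ®-reduction: reduction closed under contexts and
structural equivalence. -/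
def Red (M N : RTerm) : Prop := ∃ M' N', SEquiv M M' ∧ CStep M' N' ∧ SEquiv N' N

/-- Many-step λ®-reduction. -/
def Reds : RTerm → RTerm → Prop := Relation.ReflTransGen Red

/-- Strongly normalising λ®-terms. -/
def SNt (M : RTerm) : Prop := Acc (fun a b => Red b a) M

/-- Iterated application `h T₁ … Tₙ`. -/
def appList (h : RTerm) (Ms : List RTerm) : RTerm := Ms.foldl .app h

/-! ### Intersection types -/

/-- Strict types; an intersection type `∩ᵢⁿσᵢ` is represented by the list of
its components (`[]` is `⊤`). -/
inductive SType : Type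
  | atom : ℕ → SType
  | arrow : List SType → SType → SType

/-- Intersection types. -/
abbrev ITy := List SType

/-- Bases: finite-domain assignments of intersection types to variables. -/
abbrev Ctx := ℕ → Option ITy

def emptyCtx : Ctx := fun _ => none

/-- Basis extension `Γ, x:α`. -/
def extend (Γ : Ctx) (x : ℕ) (a : ITy) : Ctx := fun y => if y = x then some a else Γ y

/-- Pointwise bases intersection `Γ ⊓ Δ`. -/
def ctxInter (Γ Δ : Ctx) : Ctx := fun x =>
  match Γ x, Δ x with
  | some a, some b => some (a ++ b)
  | _, _ => none

/-- `Γ^⊤`: every variable of the domain gets type ⊤. -/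
def topify (Γ : Ctx) : Ctx := fun x => (Γ x).map fun _ => ([] : ITy)

/-- `Δ₀^⊤ ⊓ Δ₁ ⊓ … ⊓ Δₙ`. -/
def interFin (D0 : Ctx) {n : ℕ} (Ds : Fin n → Ctx) : Ctx :=
  (List.ofFn Ds).foldl ctxInter (topify D0)

/-- Combination `Γ, Δ` of bases with disjoint domains. -/
def ctxUnion (Γ Δ : Ctx) : Ctx := fun x => (Δ x).orElse fun _ => Γ x

def ctxDisj (Γ Δ : Ctx) : Prop := ∀ x, Γ x = none ∨ Δ x = none

def sameDom (Γ Δ : Ctx) : Prop := ∀ x, Γ x = none ↔ Δ x = none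

def ctxDom (Γ : Ctx) : Set ℕ := {x | Γ x ≠ none}

/-- The intersection type assignment system λ®∩. -/
inductive Has : Ctx → RTerm → SType → Prop
  | ax (x : ℕ) (σ : SType) : Has (extend emptyCtx x [σ]) (.var x) σ
  | arrI {Γ : Ctx} {x : ℕ} {a : ITy} {M : RTerm} {σ : SType} :
      Γ x = none → Has (extend Γ x a) M σ →
      Has Γ (.abs x M) (.arrow a σ)
  | arrE {Γ : Ctx} {M N : RTerm} {σ : SType} {ts : List SType}
      {D0 : Ctx} {t0 : SType} {Ds : Fin ts.length → Ctx} :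
      Has Γ M (.arrow ts σ) →
      Has D0 N t0 →
      (∀ i : Fin ts.length, Has (Ds i) N (ts.get i)) →
      (∀ i, sameDom (Ds i) D0) →
      ctxDisj Γ (interFin D0 Ds) →
      Has (ctxUnion Γ (interFin D0 Ds)) (.app M N) σ
  | cont {Γ : Ctx} {x y z : ℕ} {a b : ITy} {M : RTerm} {σ : SType} :
      x ≠ y → Γ x = none → Γ y = none → Γ z = none →
      Has (extend (extend Γ x a) y b) M σ →
      Has (extend Γ z (a ++ b)) (.dup z x y M) σ
  | thin {Γ : Ctx} {x : ℕ} {M : RTerm} {σ : SType} :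
      Γ x = none → Has Γ M σ → Has (extend Γ x []) (.era x M) σ

/-- The extended system λ®^[/]∩ with the (Subst) rule. -/
inductive HasS : Ctx → RTerm → SType → Prop
  | ax (x : ℕ) (σ : SType) : HasS (extend emptyCtx x [σ]) (.var x) σ
  | arrI {Γ : Ctx} {x : ℕ} {a : ITy} {M : RTerm} {σ : SType} :
      Γ x = none → HasS (extend Γ x a) M σ →
      HasS Γ (.abs x M) (.arrow a σ)
  | arrE {Γ : Ctx} {M N : RTerm} {σ : SType} {ts : List SType}
      {D0 : Ctx} {t0 : SType} {Ds : Fin ts.length → Ctx} :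
      HasS Γ M (.arrow ts σ) →
      HasS D0 N t0 →
      (∀ i : Fin ts.length, HasS (Ds i) N (ts.get i)) →
      (∀ i, sameDom (Ds i) D0) →
      ctxDisj Γ (interFin D0 Ds) →
      HasS (ctxUnion Γ (interFin D0 Ds)) (.app M N) σ
  | cont {Γ : Ctx} {x y z : ℕ} {a b : ITy} {M : RTerm} {σ : SType} :
      x ≠ y → Γ x = none → Γ y = none → Γ z = none →
      HasS (extend (extend Γ x a) y b) M σ →
      HasS (extend Γ z (a ++ b)) (.dup z x y M) σ
  | thin {Γ : Ctx} {x : ℕ} {M : RTerm} {σ : SType} :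
      Γ x = none → HasS Γ M σ → HasS (extend Γ x []) (.era x M) σ
  | subst {Γ : Ctx} {M N : RTerm} {x : ℕ} {σ : SType} {ts : List SType}
      {D0 : Ctx} {t0 : SType} {Ds : Fin ts.length → Ctx} :
      Γ x = none →
      HasS (extend Γ x ts) M σ →
      HasS D0 N t0 →
      (∀ i : Fin ts.length, HasS (Ds i) N (ts.get i)) →
      (∀ i, sameDom (Ds i) D0) →
      ctxDisj Γ (interFin D0 Ds) →
      HasS (ctxUnion Γ (interFin D0 Ds)) (.sub M x N) σ

theorem has_abs_iff {Γ : Ctx} {x : ℕ} {M : RTerm} {τ : SType} :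
    Has Γ (.abs x M) τ ↔
      ∃ (a : ITy) (σ : SType), τ = .arrow a σ ∧ Γ x = none ∧ Has (extend Γ x a) M σ := by
  refine ⟨fun h => ?_, ?_⟩
  · cases h with
    | arrI hx hM => exact ⟨_, _, rfl, hx, hM⟩
  · rintro ⟨a, σ, rfl, hx, hM⟩
    exact .arrI hx hM

theorem has_app_iff {Γ : Ctx} {M N : RTerm} {σ : SType} :
    Has Γ (.app M N) σ ↔
      ∃ (Γ' : Ctx) (ts : List SType) (D0 : Ctx) (t0 : SType) (Ds : Fin ts.length → Ctx),
        Γ = ctxUnion Γ' (interFin D0 Ds) ∧ ctxDisj Γ' (interFin D0 Ds) ∧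
        (∀ i, sameDom (Ds i) D0) ∧ Has Γ' M (.arrow ts σ) ∧ Has D0 N t0 ∧
        ∀ i : Fin ts.length, Has (Ds i) N (ts.get i) := by
  refine ⟨fun h => ?_, ?_⟩
  · cases h with
    | arrE hM hN0 hNs hsd hdisj => exact ⟨_, _, _, _, _, rfl, hdisj, hsd, hM, hN0, hNs⟩
  · rintro ⟨Γ', ts, D0, t0, Ds, rfl, hdisj, hsd, hM, hN0, hNs⟩
    exact .arrE hM hN0 hNs hsd hdisj

theorem has_dup_iff {Γ : Ctx} {z x y : ℕ} {M : RTerm} {σ : SType} :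
    Has Γ (.dup z x y M) σ ↔
      ∃ (Γ' : Ctx) (a b : ITy), Γ = extend Γ' z (a ++ b) ∧ x ≠ y ∧
        Γ' x = none ∧ Γ' y = none ∧ Γ' z = none ∧ Has (extend (extend Γ' x a) y b) M σ := by
  refine ⟨fun h => ?_, ?_⟩
  · cases h with
    | cont hxy hx hy hz hM => exact ⟨_, _, _, rfl, hxy, hx, hy, hz, hM⟩
  · rintro ⟨Γ', a, b, rfl, hxy, hx, hy, hz, hM⟩
    exact .cont hxy hx hy hz hM

theorem has_era_iff {Γ : Ctx} {x : ℕ} {M : RTerm} {σ : SType} :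
    Has Γ (.era x M) σ ↔ ∃ Γ' : Ctx, Γ = extend Γ' x [] ∧ Γ' x = none ∧ Has Γ' M σ := by
  refine ⟨fun h => ?_, ?_⟩
  · cases h with
    | thin hx hM => exact ⟨_, rfl, hx, hM⟩
  · rintro ⟨Γ', rfl, hx, hM⟩
    exact .thin hx hM

/-- Generation lemma for λ®∩. -/
theorem generation_lemma :
    (∀ (Γ : Ctx) (x : ℕ) (M : RTerm) (τ : SType),
      Has Γ (.abs x M) τ ↔
        ∃ (a : ITy) (σ : SType), τ = .arrow a σ ∧ Γ x = none ∧
          Has (extend Γ x a) M σ) ∧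
    (∀ (Γ : Ctx) (M N : RTerm) (σ : SType),
      Has Γ (.app M N) σ ↔
        ∃ (Γ' : Ctx) (ts : List SType) (D0 : Ctx) (t0 : SType)
          (Ds : Fin ts.length → Ctx),
          Γ = ctxUnion Γ' (interFin D0 Ds) ∧
          ctxDisj Γ' (interFin D0 Ds) ∧
          (∀ i, sameDom (Ds i) D0) ∧
          Has Γ' M (.arrow ts σ) ∧
          Has D0 N t0 ∧
          (∀ i : Fin ts.length, Has (Ds i) N (ts.get i))) ∧
    (∀ (Γ : Ctx) (z x y : ℕ) (M : RTerm) (σ : SType),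
      Has Γ (.dup z x y M) σ ↔
        ∃ (Γ' : Ctx) (a b : ITy),
          Γ = extend Γ' z (a ++ b) ∧ x ≠ y ∧
          Γ' x = none ∧ Γ' y = none ∧ Γ' z = none ∧
          Has (extend (extend Γ' x a) y b) M σ) ∧
    (∀ (Γ : Ctx) (x : ℕ) (M : RTerm) (σ : SType),
      Has Γ (.era x M) σ ↔
        ∃ Γ' : Ctx, Γ = extend Γ' x [] ∧ Γ' x = none ∧ Has Γ' M σ) :=
  ⟨fun _ _ _ _ => has_abs_iff, fun _ _ _ _ => has_app_iff, fun _ _ _ _ _ _ => has_dup_iff,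
    fun _ _ _ _ => has_era_iff⟩

end RC
end

section
/- Every λ®-normal form is typeable in the intersection type system λ®∩. -/
/-!
Induction on the normal form. The head `M` of a normal application `M N` is neither an
abstraction (a β-redex) nor an erasure (an ω₂-redex), and a normal form of that shape can be
given any type; so `M` gets type `⊤ → σ` and `N` is typed once, in the `⊤`-premise of (→E).
The body of a normal duplication has the same shape and is handled by (Cont).

The delicate point is that β and γω₂ are stated through the normal form of an explicit
substitution, so exhibiting these redexes needs evaluation of `M[N/x]` to terminate. This is
shown for simultaneous substitutions by induction on the term substituted into: a duplication
turns one substitution into two over freshly renamed copies, but both act on the smaller body.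
-/

namespace RC

def vars : RTerm → Finset ℕ
  | .var x => {x}
  | .abs x M => insert x (vars M)
  | .app M N => vars M ∪ vars N
  | .era x M => insert x (vars M)
  | .dup x x₁ x₂ M => {x, x₁, x₂} ∪ vars M
  | .sub M x N => insert x (vars M ∪ vars N)

theorem fv_rename_subset (ρ : ℕ → ℕ) (M : RTerm) : fv (rename ρ M) ⊆ (fv M).image ρ := by
  induction M with
  | var => simp [fv, rename]
  | abs x M ih | era x M ih | dup x x₁ x₂ M ih =>
    intro a ha
    simp only [fv, rename, Finset.mem_insert, Finset.mem_sdiff, Finset.mem_singleton] at ha ⊢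
    grind
  | app M N ihM ihN | sub M x N ihM ihN =>
    intro a ha
    simp only [fv, rename, Finset.mem_union, Finset.mem_sdiff, Finset.mem_singleton] at ha ⊢
    grind

theorem SubFree.rename (ρ : ℕ → ℕ) {M : RTerm} (h : SubFree M) : SubFree (rename ρ M) := by
  induction M with
  | app M N ihM ihN => exact ⟨ihM h.1, ihN h.2⟩
  | sub => exact h.elim
  | _ => simp_all [SubFree, RC.rename]

theorem SubFree.eraList {M : RTerm} (h : SubFree M) (l : List ℕ) : SubFree (eraList l M) := by
  induction l with
  | nil => exact h
  | cons x l ih => exact ih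

theorem SubFree.dupList {M : RTerm} (h : SubFree M) (ρ₁ ρ₂ : ℕ → ℕ) (l : List ℕ) :
    SubFree (dupList ρ₁ ρ₂ l M) := by
  induction l with
  | nil => exact h
  | cons x l ih => exact ih

theorem SStep.not_subFree {M N : RTerm} (h : SStep M N) : ¬ SubFree M := by
  induction h with
  | root h => cases h <;> exact id
  | appL _ ih => exact fun hs => ih hs.1
  | appR _ ih => exact fun hs => ih hs.2
  | subL | subR => exact id
  | abs _ ih | era _ ih | dup _ ih => exact ih

theorem SubFree.normalS {M : RTerm} (h : SubFree M) : NormalS M :=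
  fun _ hs => hs.not_subFree h

theorem SStep.ssteps_congr {f : RTerm → RTerm} (hf : ∀ {M M'}, SStep M M' → SStep (f M) (f M'))
    {M M' : RTerm} (h : SSteps M M') : SSteps (f M) (f M') :=
  Relation.ReflTransGen.lift f (fun _ _ => hf) M M' h

instance : Trans SSteps SSteps SSteps := ⟨Relation.ReflTransGen.trans⟩

theorem SubStep.ssteps {M N : RTerm} (h : SubStep M N) : SSteps M N :=
  .single (.root h)

theorem ssteps_sub_eraList {x : ℕ} {names : List ℕ} (hx : x ∉ names) (M N : RTerm) :
    SSteps (.sub (eraList names M) x N) (eraList names (.sub M x N)) := by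
  induction names with
  | nil => exact .refl
  | cons y names ih =>
    rw [List.mem_cons, not_or] at hx
    exact (SubStep.eraNe hx.1).ssteps.trans (SStep.ssteps_congr SStep.era (ih hx.2))

theorem ssteps_sub_dupList {x : ℕ} {names : List ℕ} (hx : x ∉ names) (ρ₁ ρ₂ : ℕ → ℕ)
    (M N : RTerm) :
    SSteps (.sub (dupList ρ₁ ρ₂ names M) x N) (dupList ρ₁ ρ₂ names (.sub M x N)) := by
  induction names with
  | nil => exact .refl
  | cons y names ih =>
    rw [List.mem_cons, not_or] at hx
    exact (SubStep.dupNe hx.1).ssteps.trans (SStep.ssteps_congr SStep.dup (ih hx.2))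

/-- `M[N₁/x₁]⋯[Nₖ/xₖ]`; the head of the list is the innermost substitution. -/
def subList (M : RTerm) (L : List (ℕ × RTerm)) : RTerm :=
  L.foldl (fun M p => .sub M p.1 p.2) M

@[simp] theorem subList_cons (M : RTerm) (p : ℕ × RTerm) (L : List (ℕ × RTerm)) :
    subList M (p :: L) = subList (.sub M p.1 p.2) L :=
  rfl

theorem subList_append (M : RTerm) (L₁ L₂ : List (ℕ × RTerm)) :
    subList M (L₁ ++ L₂) = subList (subList M L₁) L₂ :=
  List.foldl_append

theorem ssteps_subList (L : List (ℕ × RTerm)) {M M' : RTerm} (h : SSteps M M') :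
    SSteps (subList M L) (subList M' L) := by
  induction L generalizing M M' with
  | nil => exact h
  | cons p L ih => exact ih (SStep.ssteps_congr SStep.subL h)

theorem ssteps_subList_push {C : RTerm → RTerm} {L : List (ℕ × RTerm)}
    (hC : ∀ p ∈ L, ∀ M, SSteps (.sub (C M) p.1 p.2) (C (.sub M p.1 p.2))) (M : RTerm) :
    SSteps (subList (C M) L) (C (subList M L)) := by
  induction L generalizing M with
  | nil => exact .refl
  | cons p L ih =>
    exact (ssteps_subList L (hC p (by simp) M)).trans
      (ih (fun q hq => hC q (List.mem_cons_of_mem p hq)) _)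

theorem ssteps_subList_era_split {y : ℕ} {N : RTerm} {L₁ L₂ : List (ℕ × RTerm)}
    (h₁ : ∀ p ∈ L₁, p.1 ≠ y) (h₂ : ∀ p ∈ L₂, p.1 ∉ fv N) (M : RTerm) :
    SSteps (subList (.era y M) (L₁ ++ (y, N) :: L₂))
      (eraList (fvList N) (subList M (L₁ ++ L₂))) := by
  rw [subList_append, subList_append, subList_cons]
  calc SSteps _ (subList (.sub (.era y (subList M L₁)) y N) L₂) :=
        ssteps_subList _ (SStep.ssteps_congr SStep.subL
          (ssteps_subList_push (fun p hp _ => (SubStep.eraNe (h₁ p hp)).ssteps) M))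
    SSteps _ (subList (eraList (fvList N) (subList M L₁)) L₂) :=
        ssteps_subList _ SubStep.eraEq.ssteps
    SSteps _ _ := ssteps_subList_push
        (fun p hp M => ssteps_sub_eraList (by simpa [fvList] using h₂ p hp) M p.2) _

theorem ssteps_subList_dup_split {y y₁ y₂ : ℕ} {N : RTerm} {L₁ L₂ : List (ℕ × RTerm)}
    {M : RTerm} {ρ₁ ρ₂ : ℕ → ℕ} (h₁ : ∀ p ∈ L₁, p.1 ≠ y) (h₂ : ∀ p ∈ L₂, p.1 ∉ fv N)
    (hρ₁ : Set.InjOn ρ₁ (fv N)) (hρ₂ : Set.InjOn ρ₂ (fv N))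
    (hfresh : ∀ v ∈ fv N, ρ₁ v ∉ fv (subList M L₁) ∪ fv N ∧ ρ₂ v ∉ fv (subList M L₁) ∪ fv N)
    (hρ : ∀ v ∈ fv N, ∀ w ∈ fv N, ρ₁ v ≠ ρ₂ w) :
    SSteps (subList (.dup y y₁ y₂ M) (L₁ ++ (y, N) :: L₂))
      (dupList ρ₁ ρ₂ (fvList N)
        (subList M (L₁ ++ (y₁, rename ρ₁ N) :: (y₂, rename ρ₂ N) :: L₂))) := by
  rw [subList_append, subList_append, subList_cons]
  calc SSteps _ (subList (.sub (.dup y y₁ y₂ (subList M L₁)) y N) L₂) :=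
        ssteps_subList _ (SStep.ssteps_congr SStep.subL
          (ssteps_subList_push (fun p hp _ => (SubStep.dupNe (h₁ p hp)).ssteps) M))
    SSteps _ (subList (dupList ρ₁ ρ₂ (fvList N) (.sub (.sub (subList M L₁) y₁ (rename ρ₁ N))
        y₂ (rename ρ₂ N))) L₂) :=
        ssteps_subList _ (SubStep.dupEq hρ₁ hρ₂ hfresh hρ).ssteps
    SSteps _ _ := ssteps_subList_push
        (fun p hp M => ssteps_sub_dupList (by simpa [fvList] using h₂ p hp) ρ₁ ρ₂ M p.2) _

def keys (L : List (ℕ × RTerm)) : Finset ℕ := (L.map Prod.fst).toFinset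

/-- Invariant of the simultaneous substitutions `subList core L` met while evaluating `M[N/x]`.
Lacking α-conversion, a single substitution may mention bound names of `core`; as soon as
there are several, each substituted term must avoid all names of `core` and all keys, so that
no substitution captures another. -/
structure Admissible (core : RTerm) (L : List (ℕ × RTerm)) : Prop where
  subFree : ∀ p ∈ L, SubFree p.2
  mem_fv : ∀ p ∈ L, p.1 ∈ fv core
  nodup : (L.map Prod.fst).Nodup
  fresh : L.length ≤ 1 ∨ ∀ p ∈ L, Disjoint (fv p.2) (vars core ∪ keys L)

theorem Admissible.pairwise {core : RTerm} {L : List (ℕ × RTerm)} (h : Admissible core L) :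
    L.Pairwise fun p q => q.1 ≠ p.1 ∧ q.1 ∉ fv p.2 := by
  have hne : L.Pairwise fun p q => q.1 ≠ p.1 := (List.pairwise_map.1 h.nodup).imp Ne.symm
  rcases h.fresh with hlen | hfresh
  · match L, hlen with
    | [], _ | [_], _ => simp
  · refine hne.imp_of_mem fun {p q} hp hq hpq => ⟨hpq, fun hmem => ?_⟩
    exact Finset.disjoint_left.1 (hfresh p hp) hmem (by simp [keys, List.mem_map_of_mem hq])

theorem Admissible.mono {core core' : RTerm} {L L' : List (ℕ × RTerm)} (h : Admissible core L)
    (hL : L'.Sublist L) (hvars : vars core' ⊆ vars core) (hfv : ∀ p ∈ L', p.1 ∈ fv core') :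
    Admissible core' L' where
  subFree p hp := h.subFree p (hL.subset hp)
  mem_fv := hfv
  nodup := h.nodup.sublist (hL.map _)
  fresh := h.fresh.imp (hL.length_le.trans) fun hfresh p hp =>
    (hfresh p (hL.subset hp)).mono_right
      (Finset.union_subset_union hvars fun v => by
        simpa only [keys, List.mem_toFinset] using fun h => (hL.map Prod.fst).subset h)

theorem ssteps_subList_app {M P : RTerm} {L : List (ℕ × RTerm)}
    (hside : ∀ p ∈ L, p.1 ∈ fv M ↔ p.1 ∉ fv P)
    (hpair : L.Pairwise fun p q => q.1 ≠ p.1 ∧ q.1 ∉ fv p.2) :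
    SSteps (subList (.app M P) L)
      (.app (subList M (L.filter (·.1 ∈ fv M))) (subList P (L.filter (·.1 ∈ fv P)))) := by
  induction L generalizing M P with
  | nil => exact .refl
  | cons p L ih =>
    rw [List.pairwise_cons] at hpair
    have hkeep : ∀ A, ∀ q ∈ L, (q.1 ∈ fv (.sub A p.1 p.2) ↔ q.1 ∈ fv A) := fun A q hq => by
      simp [fv, (hpair.1 q hq).1, (hpair.1 q hq).2]
    have hfilter : ∀ A, L.filter (·.1 ∈ fv (.sub A p.1 p.2)) = L.filter (·.1 ∈ fv A) :=
      fun A => List.filter_congr fun q hq => by simp only [hkeep A q hq]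
    by_cases hp : p.1 ∈ fv M
    · have hpP : p.1 ∉ fv P := (hside p (by simp)).1 hp
      have h : SSteps _ _ := (ssteps_subList L (SubStep.appL (P := P) (N := p.2) hp).ssteps).trans
        (ih (fun q hq => (hkeep M q hq).trans (hside q (by simp [hq]))) hpair.2)
      simpa [List.filter_cons, hp, hpP, hfilter] using h
    · have hpP : p.1 ∈ fv P := not_not.1 (mt (hside p (by simp)).2 hp)
      have h : SSteps _ _ := (ssteps_subList L (SubStep.appR (M := M) (N := p.2) hpP).ssteps).trans
        (ih (fun q hq => (hside q (by simp [hq])).trans (not_congr (hkeep P q hq).symm))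
          hpair.2)
      simpa [List.filter_cons, hp, hpP, hfilter] using h

theorem Admissible.exists_split {core N : RTerm} {y : ℕ} {L : List (ℕ × RTerm)}
    (h : Admissible core L) (hN : (y, N) ∈ L) :
    ∃ L₁ L₂, L = L₁ ++ (y, N) :: L₂ ∧ (∀ p ∈ L₁ ++ L₂, p.1 ≠ y) ∧ ∀ p ∈ L₂, p.1 ∉ fv N := by
  obtain ⟨L₁, L₂, rfl⟩ := List.append_of_mem hN
  have hpair := h.pairwise
  rw [List.pairwise_append, List.pairwise_cons] at hpair
  refine ⟨L₁, L₂, rfl, fun p hp => ?_, fun p hp => (hpair.2.1.1 p hp).2⟩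
  rcases List.mem_append.1 hp with hp | hp
  · exact (hpair.2.2 p hp (y, N) (by simp)).1.symm
  · exact (hpair.2.1.1 p hp).1

def SubstEvaluable (M : RTerm) : Prop :=
  ∀ L, Admissible M L → ∃ P, SubFree P ∧ SSteps (subList M L) P

theorem substEvaluable_var (y : ℕ) : SubstEvaluable (.var y) := by
  intro L h
  have hkey : ∀ p ∈ L, p.1 = y := by simpa [fv] using h.mem_fv
  match L, h.nodup with
  | [], _ => exact ⟨.var y, trivial, .refl⟩
  | [p], _ => exact ⟨p.2, h.subFree p (by simp), hkey p (by simp) ▸ (SubStep.var _ _).ssteps⟩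
  | p :: q :: _, hnd => simp [hkey p (by simp), hkey q (by simp)] at hnd

theorem SubstEvaluable.abs {M : RTerm} (y : ℕ) (hM : SubstEvaluable M) :
    SubstEvaluable (.abs y M) := by
  intro L h
  have hkey : ∀ p ∈ L, p.1 ∈ fv M ∧ p.1 ≠ y := by simpa [fv] using h.mem_fv
  obtain ⟨P, hP, hsteps⟩ := hM L (h.mono (.refl L) (Finset.subset_insert _ _)
    fun p hp => (hkey p hp).1)
  exact ⟨.abs y P, hP, (ssteps_subList_push (fun p hp _ => (SubStep.abs (hkey p hp).2).ssteps)
    M).trans (SStep.ssteps_congr SStep.abs hsteps)⟩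

theorem SubstEvaluable.app {M P : RTerm} (hM : SubstEvaluable M) (hP : SubstEvaluable P)
    (hdisj : Disjoint (fv M) (fv P)) : SubstEvaluable (.app M P) := by
  intro L h
  have hside : ∀ p ∈ L, p.1 ∈ fv M ↔ p.1 ∉ fv P := fun p hp =>
    ⟨fun hpM => Finset.disjoint_left.1 hdisj hpM, (Finset.mem_union.1 (h.mem_fv p hp)).resolve_right⟩
  obtain ⟨A, hA, hstepsA⟩ := hM (L.filter (·.1 ∈ fv M)) (h.mono List.filter_sublist Finset.subset_union_left
    fun p hp => by simpa using (List.mem_filter.1 hp).2)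
  obtain ⟨B, hB, hstepsB⟩ := hP (L.filter (·.1 ∈ fv P)) (h.mono List.filter_sublist Finset.subset_union_right
    fun p hp => by simpa using (List.mem_filter.1 hp).2)
  exact ⟨.app A B, ⟨hA, hB⟩, (ssteps_subList_app hside h.pairwise).trans
    ((SStep.ssteps_congr SStep.appL hstepsA).trans (SStep.ssteps_congr SStep.appR hstepsB))⟩

theorem SStep.eraList {M M' : RTerm} (h : SStep M M') (l : List ℕ) :
    SStep (eraList l M) (eraList l M') := by
  induction l with
  | nil => exact h
  | cons x l ih => exact ih.era

theorem SStep.dupList {M M' : RTerm} (h : SStep M M') (ρ₁ ρ₂ : ℕ → ℕ) (l : List ℕ) :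
    SStep (dupList ρ₁ ρ₂ l M) (dupList ρ₁ ρ₂ l M') := by
  induction l with
  | nil => exact h
  | cons x l ih => exact ih.dup

theorem SubstEvaluable.era {M : RTerm} (y : ℕ) (hM : SubstEvaluable M) :
    SubstEvaluable (.era y M) := by
  intro L h
  by_cases hy : ∃ N, (y, N) ∈ L
  · obtain ⟨N, hN⟩ := hy
    obtain ⟨L₁, L₂, rfl, hne, hfvN⟩ := h.exists_split hN
    have hsub : (L₁ ++ L₂).Sublist (L₁ ++ (y, N) :: L₂) := (List.sublist_cons_self _ _).append_left _
    obtain ⟨P, hP, hsteps⟩ := hM _ (h.mono hsub (Finset.subset_insert _ _) fun p hp =>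
      (Finset.mem_insert.1 (h.mem_fv p (hsub.subset hp))).resolve_left (hne p hp))
    exact ⟨eraList (fvList N) P, hP.eraList _, (ssteps_subList_era_split (fun p hp =>
      hne p (List.mem_append_left _ hp)) hfvN M).trans
      (SStep.ssteps_congr (fun h => h.eraList _) hsteps)⟩
  · have hne : ∀ p ∈ L, p.1 ≠ y := fun p hp hpy => hy ⟨p.2, hpy ▸ hp⟩
    obtain ⟨P, hP, hsteps⟩ := hM L (h.mono (.refl L) (Finset.subset_insert _ _) fun p hp =>
      (Finset.mem_insert.1 (h.mem_fv p hp)).resolve_left (hne p hp))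
    exact ⟨.era y P, hP, (ssteps_subList_push (fun p hp _ => (SubStep.eraNe (hne p hp)).ssteps)
      M).trans (SStep.ssteps_congr SStep.era hsteps)⟩

theorem exists_fresh_renamings (S : Finset ℕ) :
    ∃ ρ₁ ρ₂ : ℕ → ℕ, ρ₁.Injective ∧ ρ₂.Injective ∧ (∀ v, ρ₁ v ∉ S ∧ ρ₂ v ∉ S) ∧
      ∀ v w, ρ₁ v ≠ ρ₂ w := by
  obtain ⟨n, hn⟩ := S.exists_nat_subset_range
  refine ⟨fun v => n + 2 * v, fun v => n + 2 * v + 1, fun a b h => by simpa using h,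
    fun a b h => by simpa using h, fun v => ⟨fun hv => ?_, fun hv => ?_⟩, fun v w => by dsimp only; omega⟩
  all_goals have := Finset.mem_range.1 (hn hv); dsimp only at this; omega

theorem disjoint_fv_rename {ρ : ℕ → ℕ} {S : Finset ℕ} (hρ : ∀ v, ρ v ∉ S) (N : RTerm) :
    Disjoint (fv (rename ρ N)) S :=
  Finset.disjoint_left.2 fun v hv => by
    obtain ⟨w, -, rfl⟩ := Finset.mem_image.1 (fv_rename_subset ρ N hv)
    exact hρ w

theorem Admissible.dup_expand {y y₁ y₂ : ℕ} {M N N₁ N₂ : RTerm} {L₁ L₂ : List (ℕ × RTerm)}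
    (h : Admissible (.dup y y₁ y₂ M) (L₁ ++ (y, N) :: L₂)) (hy : ∀ p ∈ L₁ ++ L₂, p.1 ≠ y)
    (hy₁ : y₁ ∈ fv M) (hy₂ : y₂ ∈ fv M) (hne : y₁ ≠ y₂) (hN₁ : SubFree N₁) (hN₂ : SubFree N₂)
    (hfresh₁ : Disjoint (fv N₁) (vars (.dup y y₁ y₂ M) ∪ keys (L₁ ++ (y, N) :: L₂)))
    (hfresh₂ : Disjoint (fv N₂) (vars (.dup y y₁ y₂ M) ∪ keys (L₁ ++ (y, N) :: L₂))) :
    Admissible M (L₁ ++ (y₁, N₁) :: (y₂, N₂) :: L₂) := by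
  have hsub : (L₁ ++ L₂).Sublist (L₁ ++ (y, N) :: L₂) := (List.sublist_cons_self _ _).append_left _
  have hold : ∀ p ∈ L₁ ++ L₂, p.1 ∈ fv M ∧ p.1 ≠ y₁ ∧ p.1 ≠ y₂ := fun p hp => by
    have := h.mem_fv p (hsub.subset hp)
    simp only [fv, Finset.mem_insert, Finset.mem_sdiff, Finset.mem_singleton, hy p hp,
      false_or] at this
    tauto
  have hmem : ∀ p, p ∈ L₁ ++ (y₁, N₁) :: (y₂, N₂) :: L₂ ↔
      p = (y₁, N₁) ∨ p = (y₂, N₂) ∨ p ∈ L₁ ++ L₂ := fun p => by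
    simp only [List.mem_append, List.mem_cons]; tauto
  have hvars : vars M ∪ keys (L₁ ++ (y₁, N₁) :: (y₂, N₂) :: L₂) ⊆
      vars (.dup y y₁ y₂ M) ∪ keys (L₁ ++ (y, N) :: L₂) := by
    intro v
    simp only [vars, keys, Finset.mem_union, Finset.mem_insert, Finset.mem_singleton,
      List.mem_toFinset, List.map_append, List.map_cons, List.mem_append, List.mem_cons]
    tauto
  refine ⟨fun p hp => ?_, fun p hp => ?_, ?_, Or.inr fun p hp => ?_⟩
  · rcases (hmem p).1 hp with rfl | rfl | hp
    exacts [hN₁, hN₂, h.subFree p (hsub.subset hp)]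
  · rcases (hmem p).1 hp with rfl | rfl | hp
    exacts [hy₁, hy₂, (hold p hp).1]
  · have hfresh : ∀ z ∈ (L₁ ++ L₂).map Prod.fst, z ≠ y₁ ∧ z ≠ y₂ := fun z hz => by
      obtain ⟨p, hp, rfl⟩ := List.mem_map.1 hz
      exact (hold p hp).2
    have hnd := h.nodup.sublist (hsub.map Prod.fst)
    simp only [List.map_append, List.map_cons, List.nodup_middle, List.nodup_cons,
      List.mem_append, List.mem_cons] at hnd hfresh ⊢
    refine ⟨?_, ?_, hnd⟩ <;> grind
  · rcases (hmem p).1 hp with rfl | rfl | hp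
    · exact hfresh₁.mono_right hvars
    · exact hfresh₂.mono_right hvars
    · have hlong : ¬ (L₁ ++ (y, N) :: L₂).length ≤ 1 := fun hlen => by
        have := List.length_pos_of_mem hp
        simp only [List.length_append, List.length_cons] at hlen this
        omega
      exact ((h.fresh.resolve_left hlong) p (hsub.subset hp)).mono_right hvars

theorem SubstEvaluable.dup {M : RTerm} (y : ℕ) {y₁ y₂ : ℕ} (hM : SubstEvaluable M)
    (hy₁ : y₁ ∈ fv M) (hy₂ : y₂ ∈ fv M) (hne : y₁ ≠ y₂) : SubstEvaluable (.dup y y₁ y₂ M) := by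
  intro L h
  by_cases hy : ∃ N, (y, N) ∈ L
  · obtain ⟨N, hN⟩ := hy
    obtain ⟨L₁, L₂, rfl, hyL, hfvN⟩ := h.exists_split hN
    obtain ⟨ρ₁, ρ₂, hρ₁, hρ₂, hS, hρ⟩ := exists_fresh_renamings
      (vars (.dup y y₁ y₂ M) ∪ keys (L₁ ++ (y, N) :: L₂) ∪ (fv (subList M L₁) ∪ fv N))
    have hsfN := h.subFree _ hN
    obtain ⟨P, hP, hsteps⟩ := hM _ (h.dup_expand hyL hy₁ hy₂ hne (hsfN.rename ρ₁)
      (hsfN.rename ρ₂)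
      ((disjoint_fv_rename (fun v => (hS v).1) N).mono_right Finset.subset_union_left)
      ((disjoint_fv_rename (fun v => (hS v).2) N).mono_right Finset.subset_union_left))
    refine ⟨dupList ρ₁ ρ₂ (fvList N) P, hP.dupList _ _ _, .trans ?_
      (SStep.ssteps_congr (fun h => h.dupList ρ₁ ρ₂ _) hsteps)⟩
    exact ssteps_subList_dup_split (fun p hp => hyL p (List.mem_append_left _ hp)) hfvN
      hρ₁.injOn hρ₂.injOn
      (fun v _ => ⟨fun hm => (hS v).1 (Finset.mem_union_right _ hm),
        fun hm => (hS v).2 (Finset.mem_union_right _ hm)⟩)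
      fun v _ w _ => hρ v w
  · have hyL : ∀ p ∈ L, p.1 ≠ y := fun p hp hpy => hy ⟨p.2, hpy ▸ hp⟩
    obtain ⟨P, hP, hsteps⟩ := hM L (h.mono (.refl L) Finset.subset_union_right fun p hp => by
      have := h.mem_fv p hp
      simp only [fv, Finset.mem_insert, hyL p hp, false_or, Finset.mem_sdiff] at this
      exact this.1)
    exact ⟨.dup y y₁ y₂ P, hP, (ssteps_subList_push (fun p hp _ =>
      (SubStep.dupNe (hyL p hp)).ssteps) M).trans (SStep.ssteps_congr SStep.dup hsteps)⟩

theorem WF.substEvaluable {M : RTerm} (hM : WF M) (hsf : SubFree M) : SubstEvaluable M := by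
  induction hM with
  | var y => exact substEvaluable_var y
  | abs _ _ ih => exact (ih hsf).abs _
  | app _ _ hdisj ihM ihN => exact (ihM hsf.1).app (ihN hsf.2) hdisj
  | era _ _ ih => exact (ih hsf).era _
  | dup _ h₁ h₂ hne _ ih => exact (ih hsf).dup _ h₁ h₂ hne
  | sub => exact hsf.elim

theorem exists_normalS_of_sub {M N : RTerm} {x : ℕ} (hM : WF M) (hsf : SubFree M)
    (hx : x ∈ fv M) (hN : SubFree N) : ∃ P, SSteps (.sub M x N) P ∧ NormalS P := by
  obtain ⟨P, hP, hsteps⟩ := hM.substEvaluable hsf [(x, N)]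
    ⟨by simpa, by simpa, by simp, Or.inl (by simp)⟩
  exact ⟨P, hsteps, hP.normalS⟩

theorem extend_eq_update (Γ : Ctx) (x : ℕ) (a : ITy) :
    extend Γ x a = Function.update Γ x (some a) := by
  funext y
  simp [extend, Function.update_apply]

theorem ctxInter_eq_none_iff (Γ Δ : Ctx) (x : ℕ) :
    ctxInter Γ Δ x = none ↔ Γ x = none ∨ Δ x = none := by
  unfold ctxInter
  cases Γ x <;> cases Δ x <;> simp

theorem foldl_ctxInter_eq_none_iff (l : List Ctx) (C : Ctx) (x : ℕ) :
    l.foldl ctxInter C x = none ↔ C x = none ∨ ∃ D ∈ l, D x = none := by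
  induction l generalizing C with
  | nil => simp
  | cons D l ih => simp [ih, ctxInter_eq_none_iff, or_assoc]

theorem interFin_eq_none_iff {D0 : Ctx} {n : ℕ} {Ds : Fin n → Ctx}
    (hsd : ∀ i, sameDom (Ds i) D0) (x : ℕ) : interFin D0 Ds x = none ↔ D0 x = none := by
  simpa [interFin, foldl_ctxInter_eq_none_iff, topify] using fun i => (hsd i x).1

theorem Has.eq_none_iff {Γ : Ctx} {M : RTerm} {σ : SType} (h : Has Γ M σ) (y : ℕ) :
    Γ y = none ↔ y ∉ fv M := by
  induction h generalizing y with
  | ax x σ => by_cases y = x <;> simp_all [extend, emptyCtx, fv]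
  | @arrI Γ x a M σ hx _ ih =>
    have := ih y
    by_cases y = x <;> simp_all [extend, fv]
  | arrE _ _ _ hsd _ ihM ihN =>
    have := interFin_eq_none_iff hsd y
    have hM := ihM y
    have hN := ihN y
    simp only [ctxUnion, fv, Finset.mem_union] at *
    cases hD : interFin _ _ y <;> simp_all
  | cont _ hx hy hz _ ih =>
    have := ih y
    simp only [extend, fv, Finset.mem_insert, Finset.mem_sdiff] at this ⊢
    grind
  | @thin Γ x M σ hx _ ih =>
    have := ih y
    by_cases y = x <;> simp_all [extend, fv]

theorem Has.abs_of_mem {Γ : Ctx} {K : RTerm} {σ : SType} {x : ℕ} (h : Has Γ K σ)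
    (hx : x ∈ fv K) : ∃ Δ a, Has Δ (.abs x K) (.arrow a σ) := by
  obtain ⟨a, ha⟩ := Option.ne_none_iff_exists'.1 (mt (h.eq_none_iff x).1 (not_not.2 hx))
  refine ⟨Function.update Γ x none, a, .arrI (by simp) ?_⟩
  rwa [extend_eq_update, Function.update_idem, ← ha, Function.update_eq_self]

theorem Has.dup_of_mem {Γ : Ctx} {K : RTerm} {σ : SType} {z x₁ x₂ : ℕ} (h : Has Γ K σ)
    (hne : x₁ ≠ x₂) (h₁ : x₁ ∈ fv K) (h₂ : x₂ ∈ fv K) (hz : z ∉ fv K \ {x₁, x₂}) :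
    ∃ Δ, Has Δ (.dup z x₁ x₂ K) σ := by
  obtain ⟨a, ha⟩ := Option.ne_none_iff_exists'.1 (mt (h.eq_none_iff x₁).1 (not_not.2 h₁))
  obtain ⟨b, hb⟩ := Option.ne_none_iff_exists'.1 (mt (h.eq_none_iff x₂).1 (not_not.2 h₂))
  set Δ := Function.update (Function.update Γ x₁ none) x₂ none
  have hΔz : Δ z = none := by
    by_cases hz₁ : z = x₁
    · simp [Δ, hz₁, hne]
    by_cases hz₂ : z = x₂
    · simp [Δ, hz₂]
    simpa [Δ, hz₁, hz₂, h.eq_none_iff] using hz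
  have hΓ : extend (extend Δ x₁ a) x₂ b = Γ := by
    funext w
    by_cases hw₂ : w = x₂
    · simp [extend, hw₂, hb]
    by_cases hw₁ : w = x₁
    · simp [extend, hw₁, hne, ha]
    simp [extend, Δ, hw₁, hw₂]
  exact ⟨_, .cont hne (by simp [Δ, hne]) (by simp [Δ]) hΔz (hΓ ▸ h)⟩

theorem Has.app_of_arrow_nil {Γ Δ : Ctx} {M N : RTerm} {σ τ : SType}
    (hM : Has Γ M (.arrow [] σ)) (hN : Has Δ N τ) (hdisj : Disjoint (fv M) (fv N)) :
    ∃ Θ, Has Θ (.app M N) σ := by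
  have hsd : ∀ i : Fin 0, sameDom (Fin.elim0 i) Δ := fun i => i.elim0
  refine ⟨_, .arrE (ts := []) hM hN (fun i => i.elim0) hsd fun w => ?_⟩
  rw [hM.eq_none_iff, interFin_eq_none_iff hsd, hN.eq_none_iff]
  by_cases hw : w ∈ fv M
  exacts [.inr (Finset.disjoint_left.1 hdisj hw), .inl hw]

theorem HeadStep.red {M N : RTerm} (h : HeadStep M N) : Red M N :=
  ⟨M, N, .refl M, .root h, .refl N⟩

def IsRNormal (M : RTerm) : Prop := ∀ N, ¬ Red M N

theorem IsRNormal.of_abs {x : ℕ} {M : RTerm} (h : IsRNormal (.abs x M)) : IsRNormal M :=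
  fun _ ⟨_, _, h₁, h₂, h₃⟩ => h _ ⟨_, _, h₁.abs, h₂.abs, h₃.abs⟩

theorem IsRNormal.of_appL {M P : RTerm} (h : IsRNormal (.app M P)) : IsRNormal M :=
  fun _ ⟨_, _, h₁, h₂, h₃⟩ => h _ ⟨_, _, h₁.appL, h₂.appL, h₃.appL⟩

theorem IsRNormal.of_appR {M P : RTerm} (h : IsRNormal (.app M P)) : IsRNormal P :=
  fun _ ⟨_, _, h₁, h₂, h₃⟩ => h _ ⟨_, _, h₁.appR, h₂.appR, h₃.appR⟩

theorem IsRNormal.of_era {x : ℕ} {M : RTerm} (h : IsRNormal (.era x M)) : IsRNormal M :=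
  fun _ ⟨_, _, h₁, h₂, h₃⟩ => h _ ⟨_, _, h₁.era, h₂.era, h₃.era⟩

theorem IsRNormal.of_dup {x x₁ x₂ : ℕ} {M : RTerm} (h : IsRNormal (.dup x x₁ x₂ M)) :
    IsRNormal M :=
  fun _ ⟨_, _, h₁, h₂, h₃⟩ => h _ ⟨_, _, h₁.dup, h₂.dup, h₃.dup⟩

def AbsOrEra : RTerm → Prop
  | .abs _ _ | .era _ _ => True
  | _ => False

theorem IsRNormal.not_absOrEra_of_app {M P : RTerm} (hwf : WF M) (hsf : SubFree (.app M P))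
    (h : IsRNormal (.app M P)) : ¬ AbsOrEra M := by
  cases hwf with
  | abs hK hx =>
    obtain ⟨Q, hsteps, hQ⟩ := exists_normalS_of_sub hK hsf.1 hx hsf.2
    exact fun _ => h Q (HeadStep.beta hsteps hQ).red
  | era => exact fun _ => h _ HeadStep.omega2.red
  | _ => exact id

theorem IsRNormal.not_absOrEra_of_dup {z x₁ x₂ : ℕ} {K : RTerm} (hwf : WF K) (hsf : SubFree K)
    (hx₁ : x₁ ∈ fv K) (hx₂ : x₂ ∈ fv K) (hne : x₁ ≠ x₂) (h : IsRNormal (.dup z x₁ x₂ K)) :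
    ¬ AbsOrEra K := by
  cases hwf with
  | abs => exact fun _ => h _ HeadStep.gamma1.red
  | @era K y hK _ =>
    refine fun _ => ?_
    simp only [fv, Finset.mem_insert] at hx₁ hx₂
    by_cases hy₁ : y = x₁
    · subst hy₁
      obtain ⟨Q, hsteps, hQ⟩ := exists_normalS_of_sub (N := .var z) hK hsf (hx₂.resolve_left hne.symm) trivial
      exact h Q (HeadStep.gammaOmega2 hsteps hQ).red
    by_cases hy₂ : y = x₂
    · subst hy₂
      obtain ⟨Q, hsteps, hQ⟩ := exists_normalS_of_sub (N := .var z) hK hsf (hx₁.resolve_left hne) trivial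
      exact h Q ⟨_, Q, .eps2, .root (HeadStep.gammaOmega2 hsteps hQ), .refl Q⟩
    exact h _ (HeadStep.gammaOmega1 hy₁ hy₂).red
  | _ => exact id

theorem IsRNormal.typeable {M : RTerm} (hwf : WF M) (hsf : SubFree M) (hnf : IsRNormal M) :
    (∃ Γ σ, Has Γ M σ) ∧ (¬ AbsOrEra M → ∀ σ, ∃ Γ, Has Γ M σ) := by
  induction hwf with
  | var x => exact ⟨⟨_, _, .ax x (.atom 0)⟩, fun _ σ => ⟨_, .ax x σ⟩⟩
  | abs _ hx ih =>
    obtain ⟨Γ, σ, h⟩ := (ih hsf hnf.of_abs).1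
    obtain ⟨Δ, a, h'⟩ := h.abs_of_mem hx
    exact ⟨⟨Δ, _, h'⟩, fun hn => (hn trivial).elim⟩
  | app hM _ hdisj ihM ihN =>
    have hany : ∀ σ, ∃ Γ, Has Γ (.app _ _) σ := fun σ => by
      obtain ⟨Γ, hΓ⟩ := (ihM hsf.1 hnf.of_appL).2 (hnf.not_absOrEra_of_app hM hsf) (.arrow [] σ)
      obtain ⟨Δ, τ, hΔ⟩ := (ihN hsf.2 hnf.of_appR).1
      exact hΓ.app_of_arrow_nil hΔ hdisj
    obtain ⟨Γ, hΓ⟩ := hany (.atom 0)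
    exact ⟨⟨Γ, _, hΓ⟩, fun _ => hany⟩
  | era _ hx ih =>
    obtain ⟨Γ, σ, h⟩ := (ih hsf hnf.of_era).1
    exact ⟨⟨_, σ, .thin ((h.eq_none_iff _).2 hx) h⟩, fun hn => (hn trivial).elim⟩
  | dup hK hx₁ hx₂ hne hz ih =>
    obtain ⟨⟨Γ, σ, h⟩, hany⟩ := ih hsf hnf.of_dup
    obtain ⟨Δ, hΔ⟩ := h.dup_of_mem hne hx₁ hx₂ hz
    refine ⟨⟨Δ, σ, hΔ⟩, fun _ τ => ?_⟩
    obtain ⟨Γ', h'⟩ := hany (hnf.not_absOrEra_of_dup hK hsf hx₁ hx₂ hne) τ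
    exact h'.dup_of_mem hne hx₁ hx₂ hz
  | sub => exact hsf.elim

/-- Every λ®-normal form is typeable in λ®∩. -/
theorem normal_forms_typeable {M : RTerm} (hM : WF M) (hsf : SubFree M)
    (hnf : ∀ N, ¬ Red M N) : ∃ (Γ : Ctx) (σ : SType), Has Γ M σ :=
  (IsRNormal.typeable hM hsf hnf).1

end RC
end
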